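/- Let F be a free group with normal subgroups R ≤ S such that S/R has a complement in F/R. Then the Hopf-type quotient (R ∩ [S,F])/[R,F] embeds into (R ∩ [F,F])/[R,F], and the latter splits as the direct sum of (R ∩ [S,F])/[R,F] and a complement; in particular the natural map (R ∩ [S,F])/[R,F] → (R ∩ [F,F])/[R,F] is injective. -/

import Mathlib

/-!
Let `Q` be a complement of `S/R` in `F/R`. Projecting `F/R` onto `Q` along `S/R` and lifting
through the free group `F` gives an endomorphism `σ` of `F` with `σ(S) ⊆ R` and `σ ≡ id`
modulo `S`. As `S/[S,F]` is central in `F/[S,F]`, the maps `w ↦ w` and `w ↦ σ(w)` into `F/[S,F]`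
differ by central factors and therefore agree on commutators: `w⁻¹σ(w) ∈ [S,F]` for
`w ∈ [F,F]`. Hence `x ↦ xσ(x)⁻¹` induces an endomorphism of the abelian group
`(R ∩ [F,F])/[R,F]` with values in the image of `(R ∩ [S,F])/[R,F]`, and it fixes that image
because `σ([S,F]) ⊆ [R,F]`. A retraction of an abelian group onto a subgroup splits it as a
direct product.
-/

variable {F : Type*} [Group F]

/-- The Hopf-type quotient `(R ∩ [T', F])/[R, F]` where `T'` is a subgroup of `F`
(applied below with `T' = [S,F]` and `T' = [F,F]`). -/
abbrev HopfQuot (R T : Subgroup F) [R.Normal] : Type _ :=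
  ↥(R ⊓ T) ⧸ ((⁅R, (⊤ : Subgroup F)⁆).subgroupOf (R ⊓ T))

open Subgroup
open scoped commutatorElement

section Commutator

variable {G G' Q : Type*} [Group G] [Group G'] [Group Q]

theorem commutatorElement_mul_mul_of_mem_center {a b c d : Q} (hc : c ∈ center Q)
    (hd : d ∈ center Q) : ⁅a * c, b * d⁆ = ⁅a, b⁆ := by
  have hc' : ⁅c, b * d⁆ = 1 := Commute.commutator_eq (mem_center_iff.mp hc _).symm
  have hd' : ⁅a, d⁆ = 1 := Commute.commutator_eq (mem_center_iff.mp hd _)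
  rw [commutatorElement_mul_left_eq_conj_mul, hc', commutatorElement_mul_right_eq_mul_conj, hd']
  group

theorem MonoidHom.commutator_le_eqLocus_of_inv_mul_mem_center (f₁ f₂ : G →* Q)
    (h : ∀ g, (f₁ g)⁻¹ * f₂ g ∈ center Q) : ⁅(⊤ : Subgroup G), ⊤⁆ ≤ f₁.eqLocus f₂ := by
  rw [commutator_le]
  intro u _ v _
  change f₁ ⁅u, v⁆ = f₂ ⁅u, v⁆
  rw [map_commutatorElement, map_commutatorElement, ← mul_inv_cancel_left (f₁ u) (f₂ u),
    ← mul_inv_cancel_left (f₁ v) (f₂ v), commutatorElement_mul_mul_of_mem_center (h u) (h v)]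

theorem QuotientGroup.map_mk'_le_center (N : Subgroup G) [N.Normal] :
    N.map (QuotientGroup.mk' ⁅N, ⊤⁆) ≤ center (G ⧸ ⁅N, ⊤⁆) := by
  rw [← commutator_top_right_eq_bot_iff_le_center,
    ← map_top_of_surjective _ (QuotientGroup.mk'_surjective _), ← map_commutator,
    Subgroup.map_eq_bot_iff, QuotientGroup.ker_mk']

theorem inv_mul_map_mem_commutator_top {N : Subgroup G} [N.Normal] (σ : G →* G)
    (hσ : ∀ g, g⁻¹ * σ g ∈ N) {w : G} (hw : w ∈ ⁅(⊤ : Subgroup G), (⊤ : Subgroup G)⁆) :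
    w⁻¹ * σ w ∈ ⁅N, (⊤ : Subgroup G)⁆ := by
  rw [← QuotientGroup.eq]
  refine MonoidHom.commutator_le_eqLocus_of_inv_mul_mem_center (QuotientGroup.mk' ⁅N, ⊤⁆)
    ((QuotientGroup.mk' ⁅N, ⊤⁆).comp σ) (fun g => ?_) hw
  exact QuotientGroup.map_mk'_le_center N (mem_map_of_mem _ (hσ g))

theorem Subgroup.map_commutator_top_le (f : G →* G') {H : Subgroup G} {K : Subgroup G'}
    (h : H.map f ≤ K) : ⁅H, (⊤ : Subgroup G)⁆.map f ≤ ⁅K, (⊤ : Subgroup G')⁆ := by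
  rw [map_commutator]
  exact commutator_mono h le_top

end Commutator

theorem Subgroup.IsComplement'.exists_projection {G : Type*} [Group G] {N Q : Subgroup G}
    [N.Normal] (h : N.IsComplement' Q) :
    ∃ π : G →* G, N ≤ π.ker ∧ ∀ g, g⁻¹ * π g ∈ N := by
  let e := h.symm.QuotientMulEquiv
  refine ⟨Q.subtype.comp (e.toMonoidHom.comp (QuotientGroup.mk' N)), fun n hn => ?_, fun g => ?_⟩
  · simp [(QuotientGroup.eq_one_iff n).mpr hn]
  · rw [← QuotientGroup.eq]
    exact (e.symm_apply_apply g).symm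

theorem FreeGroup.exists_comp_eq_of_surjective {α G H : Type*} [Group G] [Group H]
    {q : G →* H} (hq : Function.Surjective q) (φ : FreeGroup α →* H) :
    ∃ ψ : FreeGroup α →* G, q.comp ψ = φ :=
  ⟨FreeGroup.lift fun a => Function.surjInv hq (φ (FreeGroup.of a)),
    FreeGroup.ext_hom _ _ fun a => by simp [Function.surjInv_eq]⟩

theorem FreeGroup.exists_endomorphism_of_isComplement' {α : Type*}
    {R S : Subgroup (FreeGroup α)} [R.Normal] [hS : S.Normal] (hRS : R ≤ S)
    {Q : Subgroup (FreeGroup α ⧸ R)} (hQ : (S.map (QuotientGroup.mk' R)).IsComplement' Q) :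
    ∃ σ : FreeGroup α →* FreeGroup α, S.map σ ≤ R ∧ ∀ w, w⁻¹ * σ w ∈ S := by
  have := hS.map _ (QuotientGroup.mk'_surjective R)
  obtain ⟨π, hπN, hπ⟩ := hQ.exists_projection
  obtain ⟨σ, hσ⟩ := FreeGroup.exists_comp_eq_of_surjective (QuotientGroup.mk'_surjective R)
    (π.comp (QuotientGroup.mk' R))
  have hσπ (w : FreeGroup α) : QuotientGroup.mk' R (σ w) = π w := DFunLike.congr_fun hσ w
  refine ⟨σ, ?_, fun w => ?_⟩
  · rw [map_le_iff_le_comap]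
    intro s hs
    rw [mem_comap, ← QuotientGroup.ker_mk' R, MonoidHom.mem_ker, hσπ]
    exact hπN (mem_map_of_mem _ hs)
  · have hmem : w⁻¹ * σ w ∈ (S.map (QuotientGroup.mk' R)).comap (QuotientGroup.mk' R) := by
      rw [mem_comap, _root_.map_mul, _root_.map_inv, hσπ]
      exact hπ _
    rwa [comap_map_eq, QuotientGroup.ker_mk', sup_eq_left.mpr hRS] at hmem

namespace HopfQuot

instance isMulCommutative (R T : Subgroup F) [R.Normal] : IsMulCommutative (HopfQuot R T) := by
  refine Normal.quotient_commutative_iff_commutator_le.mpr ?_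
  rw [subgroupOf, ← map_le_iff_le_comap, map_subtype_commutator]
  exact commutator_mono inf_le_left le_top

variable {R T : Subgroup F} [R.Normal]

theorem injective_of_map_inclusion {T' : Subgroup F} (hle : R ⊓ T ≤ R ⊓ T')
    (g : HopfQuot R T →* HopfQuot R T')
    (hg : ∀ x, g (QuotientGroup.mk x) = QuotientGroup.mk (inclusion hle x)) :
    Function.Injective g := by
  rw [injective_iff_map_eq_one]
  intro x hx
  induction x using QuotientGroup.induction_on with
  | H x =>
    rw [hg, QuotientGroup.eq_one_iff, mem_subgroupOf] at hx
    rwa [QuotientGroup.eq_one_iff, mem_subgroupOf]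

variable {F' : Type*} [Group F'] {R' T' : Subgroup F'} [R'.Normal]

def map (σ : F →* F') (hR : R.map σ ≤ R') (hT : T.map σ ≤ T') : HopfQuot R T →* HopfQuot R' T' :=
  QuotientGroup.map _ _
    ((σ.comp (R ⊓ T).subtype).codRestrict (R' ⊓ T') fun x =>
      ⟨hR (mem_map_of_mem σ x.2.1), hT (mem_map_of_mem σ x.2.2)⟩)
    fun _ hx => map_commutator_top_le σ hR (mem_map_of_mem σ hx)

theorem map_mk (σ : F →* F') (hR : R.map σ ≤ R') (hT : T.map σ ≤ T') (x : ↥(R ⊓ T)) :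
    map σ hR hT (QuotientGroup.mk x) =
      QuotientGroup.mk ⟨σ x, hR (mem_map_of_mem σ x.2.1), hT (mem_map_of_mem σ x.2.2)⟩ :=
  rfl

end HopfQuot

def Subgroup.mulEquivProdKerOfRetraction {A : Type*} [CommGroup A] (B : Subgroup A) (r : A →* A)
    (hr : ∀ a, r a ∈ B) (hrB : ∀ b ∈ B, r b = b) : A ≃* B × r.ker where
  toFun a := (⟨r a, hr a⟩, ⟨a / r a, by simp [hrB _ (hr a)]⟩)
  invFun p := p.1 * p.2
  left_inv a := mul_div_cancel (r a) a
  right_inv p := by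
    have hp : r (p.1 * p.2) = p.1 := by rw [map_mul, hrB _ p.1.2, p.2.2, mul_one]
    ext <;> simp [hp]
  map_mul' a b := by ext <;> simp [mul_div_mul_comm]

open scoped IsMulCommutative

theorem HopfQuot.exists_retraction_onto_range {R S : Subgroup F} [R.Normal] [S.Normal]
    (hRS : R ≤ S) (σ : F →* F) (hσS : S.map σ ≤ R) (hσ : ∀ w, w⁻¹ * σ w ∈ S)
    (hle : R ⊓ ⁅S, (⊤ : Subgroup F)⁆ ≤ R ⊓ ⁅(⊤ : Subgroup F), (⊤ : Subgroup F)⁆)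
    (g : HopfQuot R ⁅S, (⊤ : Subgroup F)⁆ →* HopfQuot R ⁅(⊤ : Subgroup F), (⊤ : Subgroup F)⁆)
    (hg : ∀ x, g (QuotientGroup.mk x) = QuotientGroup.mk (inclusion hle x)) :
    ∃ r : HopfQuot R ⁅(⊤ : Subgroup F), (⊤ : Subgroup F)⁆ →*
        HopfQuot R ⁅(⊤ : Subgroup F), (⊤ : Subgroup F)⁆,
      (∀ a, r a ∈ g.range) ∧ ∀ b ∈ g.range, r b = b := by
  have hσR : R.map σ ≤ R := (map_mono hRS).trans hσS
  let p : HopfQuot R ⁅(⊤ : Subgroup F), (⊤ : Subgroup F)⁆ →*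
      HopfQuot R ⁅(⊤ : Subgroup F), (⊤ : Subgroup F)⁆ :=
    HopfQuot.map σ hσR (map_commutator_top_le σ le_top)
  refine ⟨MonoidHom.id _ / p, fun a => ?_, ?_⟩
  · induction a using QuotientGroup.induction_on with
    | H x =>
      have hxR : (σ x)⁻¹ * x ∈ R := R.mul_mem (R.inv_mem (hσR (mem_map_of_mem σ x.2.1))) x.2.1
      have hxS : (σ x)⁻¹ * x ∈ ⁅S, (⊤ : Subgroup F)⁆ := by
        simpa using inv_mem (inv_mul_map_mem_commutator_top σ hσ x.2.2)
      refine ⟨QuotientGroup.mk ⟨(σ x)⁻¹ * x, hxR, hxS⟩, ?_⟩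
      rw [hg, MonoidHom.div_apply, MonoidHom.id_apply, HopfQuot.map_mk, div_eq_inv_mul]
      rfl
  · rintro _ ⟨y, rfl⟩
    induction y using QuotientGroup.induction_on with
    | H z =>
      have hz : p (g z) = 1 := by
        rw [hg, HopfQuot.map_mk, QuotientGroup.eq_one_iff, mem_subgroupOf]
        exact map_commutator_top_le σ hσS (mem_map_of_mem σ z.2.2)
      rw [MonoidHom.div_apply, hz, div_one, MonoidHom.id_apply]

/-- Let `F` be a free group with normal subgroups `R ≤ S` such that `S/R` has a
complement in `F/R`. Then the natural map
`(R ∩ [S,F])/[R,F] → (R ∩ [F,F])/[R,F]` is injective, and the latter group splits as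
the direct sum of the image of the former and a complement. -/
theorem hopf_quotient_split (α : Type*) (R S : Subgroup (FreeGroup α))
    [R.Normal] [S.Normal] (hRS : R ≤ S)
    (hcomp : ∃ Q : Subgroup (FreeGroup α ⧸ R),
      (S.map (QuotientGroup.mk' R)).IsComplement' Q)
    (hle : R ⊓ ⁅S, (⊤ : Subgroup (FreeGroup α))⁆ ≤
      R ⊓ ⁅(⊤ : Subgroup (FreeGroup α)), (⊤ : Subgroup (FreeGroup α))⁆)
    (g : HopfQuot R ⁅S, (⊤ : Subgroup (FreeGroup α))⁆ →*
      HopfQuot R ⁅(⊤ : Subgroup (FreeGroup α)), (⊤ : Subgroup (FreeGroup α))⁆)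
    (hg : ∀ x : ↥(R ⊓ ⁅S, (⊤ : Subgroup (FreeGroup α))⁆),
      g (QuotientGroup.mk x) = QuotientGroup.mk (Subgroup.inclusion hle x)) :
    Function.Injective g ∧
      ∃ D : Subgroup (HopfQuot R ⁅(⊤ : Subgroup (FreeGroup α)), (⊤ : Subgroup (FreeGroup α))⁆),
        D.Normal ∧
        Nonempty (HopfQuot R ⁅(⊤ : Subgroup (FreeGroup α)), (⊤ : Subgroup (FreeGroup α))⁆
          ≃* (↥g.range × ↥D)) := by
  refine ⟨HopfQuot.injective_of_map_inclusion hle g hg, ?_⟩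
  obtain ⟨Q, hQ⟩ := hcomp
  obtain ⟨σ, hσS, hσ⟩ := FreeGroup.exists_endomorphism_of_isComplement' hRS hQ
  obtain ⟨r, hr, hrg⟩ := HopfQuot.exists_retraction_onto_range hRS σ hσS hσ hle g hg
  exact ⟨r.ker, r.normal_ker, ⟨g.range.mulEquivProdKerOfRetraction r hr hrg⟩⟩
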